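/- There exists an absolute constant c > 0 such that the following holds: for all integers u ≥ 2 and k ≥ b ≥ 1, every finite set X of positive integers contained in {1,…,u} admits a (k, Δ)-halver with Δ = c·(k/√b)·(log(2·k·u))². -/
import Mathlib


/-- `SUM S` is the sum of the elements of the finite set `S`. -/
def SUM (S : Finset ℕ) : ℕ := S.sum id

/-- `(X', X'')` is a `(k, Δ)`-halver of `X`. -/
def IsHalver (X X' X'' : Finset ℕ) (k Δ : ℝ) : Prop :=
  X' ∪ X'' = X ∧ Disjoint X' X'' ∧
  ∀ S ⊆ X, (S.card : ℝ) ≤ k →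
    ∃ Shat ⊆ X, (Shat.card : ℝ) ≤ k ∧ SUM Shat = SUM S ∧
      ((Shat ∩ X').card : ℝ) ≤ (Shat.card : ℝ) / 2 + Δ ∧
      ((Shat ∩ X'').card : ℝ) ≤ (Shat.card : ℝ) / 2 + Δ

open Finset

lemma key_exp (r : ℝ) (h0 : 0 ≤ r) (h1 : r ≤ 1) :
    1 + Real.exp r ≤ 2 * Real.exp (r/2 + r^2/4) := by
  set a := Real.exp (r/2) with ha
  have hapos : 0 < a := Real.exp_pos _
  have h1a : a * (1 - r/2) ≤ 1 := by
    have := Real.add_one_le_exp (-(r/2))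
    have h2 : (1 - r/2) ≤ Real.exp (-(r/2)) := by linarith
    calc a * (1 - r/2) ≤ a * Real.exp (-(r/2)) := by
          rcases le_or_gt 0 (1 - r/2) with h|h
          · exact mul_le_mul_of_nonneg_left h2 hapos.le
          · nlinarith [Real.exp_pos (-(r/2))]
      _ = 1 := by rw [ha, ← Real.exp_add]; simp
  have ha2 : a ≤ 2 := by
    have : a ≤ Real.exp (1/2 : ℝ) := Real.exp_le_exp.2 (by linarith)
    have hsq : Real.exp (1/2 : ℝ) ^ 2 = Real.exp 1 := by
      rw [← Real.exp_nat_mul]; norm_num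
    nlinarith [Real.exp_pos (1/2 : ℝ), Real.exp_one_lt_d9]
  have hsq : a * a = Real.exp r := by rw [ha, ← Real.exp_add]; ring_nf
  have h3 : Real.exp (r/2 + r^2/4) = a * Real.exp (r^2/4) := by
    rw [ha, ← Real.exp_add]
  have h4 : 1 + r^2/4 ≤ Real.exp (r^2/4) := by
    have := Real.add_one_le_exp (r^2/4); linarith
  have h5 : a * (1 + r^2/4) ≤ a * Real.exp (r^2/4) :=
    mul_le_mul_of_nonneg_left h4 hapos.le
  have hge1 : 1 ≤ a := Real.one_le_exp (by linarith)
  have d1 : a - 1 ≤ a * (r/2) := by nlinarith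
  have d2 : (a-1)^2 ≤ (a*(r/2))^2 := by
    apply pow_le_pow_left₀ (by linarith) d1
  have h6 : 1 + a * a ≤ 2 * (a * (1 + r^2/4)) := by nlinarith [sq_nonneg r]
  rw [h3, ← hsq]; linarith

lemma powerset_filter_card_sum (R : Finset ℕ) (Q : ℕ → Prop) [DecidablePred Q] :
    (R.powerset.filter (fun B => Q B.card)).card
      = ∑ j ∈ (Finset.range (R.card + 1)).filter Q, R.card.choose j := by
  classical
  rw [powerset_card_biUnion, filter_biUnion, card_biUnion (by
    intro i hi j hj hij
    exact Finset.disjoint_filter_filter (R.pairwise_disjoint_powersetCard hij))]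
  rw [← Finset.sum_filter_add_sum_filter_not (Finset.range (R.card+1)) Q
    (fun i => ((R.powersetCard i).filter (fun B => Q B.card)).card)]
  have h1 : ∀ j ∈ (Finset.range (R.card+1)).filter Q,
      ((R.powersetCard j).filter (fun B => Q B.card)).card = R.card.choose j := by
    intro j hj
    rw [Finset.filter_true_of_mem, card_powersetCard]
    intro B hB
    rw [(mem_powersetCard.1 hB).2]
    exact (Finset.mem_filter.1 hj).2
  have h2 : ∀ j ∈ (Finset.range (R.card+1)).filter (fun j => ¬ Q j),
      ((R.powersetCard j).filter (fun B => Q B.card)).card = 0 := by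
    intro j hj
    rw [Finset.card_eq_zero, Finset.filter_eq_empty_iff]
    intro B hB
    rw [(mem_powersetCard.1 hB).2]
    exact (Finset.mem_filter.1 hj).2
  rw [Finset.sum_congr rfl h1, Finset.sum_congr rfl h2]
  simp

lemma chernoff_core (m : ℕ) (hm : 1 ≤ m) (t : ℝ) (ht : 0 ≤ t) (htm : t ≤ m)
    (g : ℕ → ℕ) (T : Finset ℕ) (hT : T ⊆ Finset.range (m+1))
    (hg : ∀ j ∈ T, (m + t)/2 < g j)
    (hsum : ∑ j ∈ Finset.range (m+1), (m.choose j : ℝ) * Real.exp (t/m) ^ (g j)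
      ≤ (1 + Real.exp (t/m))^m) :
    (∑ j ∈ T, (m.choose j : ℝ)) ≤ 2^m * Real.exp (-(t^2)/(4*m)) := by
  have hmpos : (0:ℝ) < m := by exact_mod_cast hm
  set r : ℝ := t / m with hr
  have hr0 : 0 ≤ r := div_nonneg ht hmpos.le
  have hr1 : r ≤ 1 := by rw [hr, div_le_one hmpos]; exact htm
  have step1 : (∑ j ∈ T, (m.choose j : ℝ))
      ≤ ∑ j ∈ T, (m.choose j : ℝ) * Real.exp (r * g j - r * ((m+t)/2)) := by
    apply Finset.sum_le_sum
    intro j hj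
    have h1 : (1:ℝ) ≤ Real.exp (r * g j - r * ((m+t)/2)) := by
      apply Real.one_le_exp
      have := hg j hj
      nlinarith
    nlinarith [show (0:ℝ) ≤ (m.choose j : ℝ) from Nat.cast_nonneg _]
  have step2 : ∑ j ∈ T, (m.choose j : ℝ) * Real.exp (r * g j - r * ((m+t)/2))
      = Real.exp (- (r * ((m+t)/2))) * ∑ j ∈ T, (m.choose j : ℝ) * Real.exp r ^ (g j) := by
    rw [Finset.mul_sum]
    apply Finset.sum_congr rfl
    intro j hj
    rw [← Real.exp_nat_mul,
      show r * (g j : ℝ) - r * (((m:ℝ)+t)/2) = -(r*(((m:ℝ)+t)/2)) + (g j : ℝ)*r by ring,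
      Real.exp_add]
    ring
  have step3 : ∑ j ∈ T, (m.choose j : ℝ) * Real.exp r ^ (g j)
      ≤ (1 + Real.exp r)^m := by
    refine le_trans (Finset.sum_le_sum_of_subset_of_nonneg hT ?_) hsum
    intro j _ _
    positivity
  have step4 : (1 + Real.exp r)^m ≤ (2 * Real.exp (r/2 + r^2/4))^m := by
    apply pow_le_pow_left₀ (by positivity)
    exact key_exp r hr0 hr1
  have step5 : (2 * Real.exp (r/2 + r^2/4))^m = 2^m * Real.exp (m * (r/2 + r^2/4)) := by
    rw [mul_pow, ← Real.exp_nat_mul]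
  have hexp : -(r * ((m+t)/2)) + (m:ℝ) * (r/2 + r^2/4) = -(t^2)/(4*m) := by
    rw [hr]; field_simp; ring
  calc (∑ j ∈ T, (m.choose j : ℝ))
      ≤ Real.exp (- (r * ((m+t)/2))) * ∑ j ∈ T, (m.choose j : ℝ) * Real.exp r ^ (g j) := by
        rw [← step2]; exact step1
    _ ≤ Real.exp (- (r * ((m+t)/2))) * (2^m * Real.exp (m * (r/2 + r^2/4))) := by
        apply mul_le_mul_of_nonneg_left _ (Real.exp_pos _).le
        rw [← step5]; exact le_trans step3 step4
    _ = 2^m * Real.exp (-(t^2)/(4*m)) := by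
        rw [← hexp, Real.exp_add]; ring

lemma chernoff_upper (m : ℕ) (hm : 1 ≤ m) (t : ℝ) (ht : 0 ≤ t) :
    (∑ j ∈ (Finset.range (m+1)).filter (fun j : ℕ => t < 2*(j:ℝ) - m), (m.choose j : ℝ))
      ≤ 2^m * Real.exp (-(t^2)/(4*m)) := by
  classical
  rcases le_or_gt t m with htm | htm
  · apply chernoff_core m hm t ht htm id _ (Finset.filter_subset _ _)
    · intro j hj
      have := (Finset.mem_filter.1 hj).2
      simp only [id]
      linarith
    · rw [show (1 + Real.exp (t/m)) = (Real.exp (t/m) + 1) by ring, add_pow]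
      apply le_of_eq
      apply Finset.sum_congr rfl
      intro j hj
      simp [mul_comm]
  · have : (Finset.range (m+1)).filter (fun j : ℕ => t < 2*(j:ℝ) - m) = ∅ := by
      rw [Finset.filter_eq_empty_iff]
      intro j hj
      have hjm : j ≤ m := Nat.lt_succ_iff.1 (Finset.mem_range.1 hj)
      have : (j:ℝ) ≤ m := by exact_mod_cast hjm
      push_neg
      linarith
    rw [this]
    simp only [Finset.sum_empty]
    positivity

lemma chernoff_lower (m : ℕ) (hm : 1 ≤ m) (t : ℝ) (ht : 0 ≤ t) :
    (∑ j ∈ (Finset.range (m+1)).filter (fun j : ℕ => 2*(j:ℝ) - m < -t), (m.choose j : ℝ))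
      ≤ 2^m * Real.exp (-(t^2)/(4*m)) := by
  classical
  rcases le_or_gt t m with htm | htm
  · apply chernoff_core m hm t ht htm (fun j => m - j) _ (Finset.filter_subset _ _)
    · intro j hj
      have h2 := (Finset.mem_filter.1 hj).2
      have hjm : j ≤ m := Nat.lt_succ_iff.1 (Finset.mem_range.1 (Finset.filter_subset _ _ hj))
      have : ((m - j : ℕ) : ℝ) = (m:ℝ) - j := by
        rw [Nat.cast_sub hjm]
      rw [this]
      linarith
    · rw [add_pow]
      apply le_of_eq
      apply Finset.sum_congr rfl
      intro j hj
      simp [mul_comm]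
  · have : (Finset.range (m+1)).filter (fun j : ℕ => 2*(j:ℝ) - m < -t) = ∅ := by
      rw [Finset.filter_eq_empty_iff]
      intro j hj
      push_neg
      have : (0:ℝ) ≤ j := Nat.cast_nonneg _
      linarith
    rw [this]
    simp only [Finset.sum_empty]
    positivity

lemma split_inv {X R p1 p2 : Finset ℕ} (h1 : p1 ⊆ R) (h2 : p2 ⊆ X \ R) :
    R ∩ (p1 ∪ p2) = p1 ∧ (p1 ∪ p2) \ R = p2 := by
  constructor
  · ext x
    simp only [Finset.mem_inter, Finset.mem_union]
    constructor
    · rintro ⟨hxR, hx1 | hx2⟩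
      · exact hx1
      · exact absurd hxR (Finset.mem_sdiff.1 (h2 hx2)).2
    · intro hx1
      exact ⟨h1 hx1, Or.inl hx1⟩
  · ext x
    simp only [Finset.mem_sdiff, Finset.mem_union]
    constructor
    · rintro ⟨hx1 | hx2, hxR⟩
      · exact absurd (h1 hx1) hxR
      · exact hx2
    · intro hx2
      exact ⟨Or.inr hx2, (Finset.mem_sdiff.1 (h2 hx2)).2⟩

lemma count_split (X R : Finset ℕ) (hR : R ⊆ X) (P : Finset ℕ → Prop) [DecidablePred P] :
    (X.powerset.filter (fun A => P (R ∩ A))).card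
      = (R.powerset.filter P).card * 2 ^ (X.card - R.card) := by
  classical
  have hcard : ((R.powerset.filter P) ×ˢ (X \ R).powerset).card
      = (R.powerset.filter P).card * 2 ^ (X.card - R.card) := by
    rw [Finset.card_product, Finset.card_powerset, Finset.card_sdiff_of_subset hR]
  rw [← hcard]
  apply Finset.card_bij' (fun A _ => (R ∩ A, A \ R))
    (fun p _ => p.1 ∪ p.2)
  · intro A hA
    simp only [Finset.mem_filter, Finset.mem_powerset] at hA
    simp only [Finset.mem_product, Finset.mem_filter, Finset.mem_powerset]
    refine ⟨⟨Finset.inter_subset_left, hA.2⟩, ?_⟩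
    intro x hx
    simp only [Finset.mem_sdiff] at hx ⊢
    exact ⟨hA.1 hx.1, hx.2⟩
  · intro p hp
    simp only [Finset.mem_product, Finset.mem_filter, Finset.mem_powerset] at hp
    simp only [Finset.mem_filter, Finset.mem_powerset]
    have h1 : p.1 ⊆ R := hp.1.1
    have h2 : p.2 ⊆ X \ R := hp.2
    constructor
    · apply Finset.union_subset (h1.trans hR) (h2.trans (Finset.sdiff_subset))
    · rw [(split_inv h1 h2).1]
      exact hp.1.2
  · intro A hA
    simp only [Finset.mem_filter, Finset.mem_powerset] at hA
    ext x
    simp only [Finset.mem_union, Finset.mem_inter, Finset.mem_sdiff]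
    tauto
  · intro p hp
    simp only [Finset.mem_product, Finset.mem_filter, Finset.mem_powerset] at hp
    have h1 : p.1 ⊆ R := hp.1.1
    have h2 : p.2 ⊆ X \ R := hp.2
    rw [(split_inv h1 h2).1, (split_inv h1 h2).2]

lemma bad_count (X R : Finset ℕ) (hR : R ⊆ X) (k : ℕ) (hm1 : 1 ≤ R.card)
    (hmk : R.card ≤ k) (t : ℝ) (ht : 0 ≤ t) :
    (((X.powerset.filter
        (fun A => ¬ |2*(((R ∩ A).card : ℝ)) - R.card| ≤ t)).card : ℝ))
      ≤ 2^X.card * (2 * Real.exp (-(t^2)/(4*k))) := by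
  classical
  set m := R.card with hm
  rw [count_split X R hR (fun B => ¬ |2*((B.card : ℝ)) - m| ≤ t)]
  have hsplit : (R.powerset.filter (fun B => ¬ |2*((B.card : ℝ)) - m| ≤ t))
      = (R.powerset.filter (fun B => t < 2*((B.card : ℝ)) - m))
        ∪ (R.powerset.filter (fun B => 2*((B.card : ℝ)) - m < -t)) := by
    rw [← Finset.filter_or]
    apply Finset.filter_congr
    intro B _
    rw [abs_le]
    constructor
    · intro h
      by_contra hc
      push_neg at hc
      exact h ⟨by linarith [hc.2], by linarith [hc.1]⟩
    · intro h hc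
      rcases h with h | h
      · linarith [hc.2]
      · linarith [hc.1]
  have hub : ((R.powerset.filter (fun B => t < 2*((B.card : ℝ)) - m)).card : ℝ)
      ≤ 2^m * Real.exp (-(t^2)/(4*m)) := by
    rw [powerset_filter_card_sum R (fun j : ℕ => t < 2*(j:ℝ) - m)]
    push_cast
    exact chernoff_upper m hm1 t ht
  have hlb : ((R.powerset.filter (fun B => 2*((B.card : ℝ)) - m < -t)).card : ℝ)
      ≤ 2^m * Real.exp (-(t^2)/(4*m)) := by
    rw [powerset_filter_card_sum R (fun j : ℕ => 2*(j:ℝ) - m < -t)]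
    push_cast
    exact chernoff_lower m hm1 t ht
  have hcard : ((R.powerset.filter (fun B => ¬ |2*((B.card : ℝ)) - m| ≤ t)).card : ℝ)
      ≤ 2^m * (2 * Real.exp (-(t^2)/(4*m))) := by
    rw [hsplit]
    calc (((R.powerset.filter (fun B => t < 2*((B.card : ℝ)) - m))
        ∪ (R.powerset.filter (fun B => 2*((B.card : ℝ)) - m < -t))).card : ℝ)
        ≤ ((R.powerset.filter (fun B => t < 2*((B.card : ℝ)) - m)).card : ℝ)
          + ((R.powerset.filter (fun B => 2*((B.card : ℝ)) - m < -t)).card : ℝ) := by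
          exact_mod_cast Finset.card_union_le _ _
      _ ≤ 2^m * (2 * Real.exp (-(t^2)/(4*m))) := by linarith
  have hexpmono : Real.exp (-(t^2)/(4*m)) ≤ Real.exp (-(t^2)/(4*k)) := by
    apply Real.exp_le_exp.2
    have hmpos : (0:ℝ) < m := by exact_mod_cast hm1
    have hkpos : (0:ℝ) < k := by
      have : 1 ≤ k := le_trans hm1 hmk
      exact_mod_cast this
    have hmk' : (m:ℝ) ≤ k := by exact_mod_cast hmk
    rw [neg_div, neg_div, neg_le_neg_iff]
    gcongr
  have hmn : m ≤ X.card := Finset.card_le_card hR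
  have hpow : (2:ℝ)^m * 2^(X.card - m) = 2^X.card := by
    rw [← pow_add, Nat.add_sub_cancel' hmn]
  rw [Nat.cast_mul, Nat.cast_pow, Nat.cast_ofNat, ← hm]
  calc ((R.powerset.filter (fun B => ¬ |2*((B.card : ℝ)) - m| ≤ t)).card : ℝ)
        * 2^(X.card - m)
      ≤ (2^m * (2 * Real.exp (-(t^2)/(4*m)))) * 2^(X.card - m) := by
        apply mul_le_mul_of_nonneg_right hcard (by positivity)
    _ ≤ (2^m * (2 * Real.exp (-(t^2)/(4*k)))) * 2^(X.card - m) := by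
        have h1 : 2 * Real.exp (-(t^2)/(4*m)) ≤ 2 * Real.exp (-(t^2)/(4*k)) := by
          linarith
        have h2 := mul_le_mul_of_nonneg_left h1 (by positivity : (0:ℝ) ≤ 2^m)
        exact mul_le_mul_of_nonneg_right h2 (by positivity : (0:ℝ) ≤ (2:ℝ)^(X.card - m))
    _ = 2^X.card * (2 * Real.exp (-(t^2)/(4*k))) := by
        rw [← hpow]; ring


lemma SUM_le (u k : ℕ) (X T : Finset ℕ) (hX : ∀ x ∈ X, x ∈ Finset.Icc 1 u)
    (hT : T ⊆ X) (hTk : T.card ≤ k) : SUM T ≤ k * u := by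
  calc SUM T ≤ ∑ _x ∈ T, u := by
        apply Finset.sum_le_sum
        intro x hx
        exact (Finset.mem_Icc.1 (hX x (hT hx))).2
    _ = T.card * u := by rw [Finset.sum_const, smul_eq_mul]
    _ ≤ k * u := Nat.mul_le_mul_right u hTk

lemma SUM_pos (u : ℕ) (X T : Finset ℕ) (hX : ∀ x ∈ X, x ∈ Finset.Icc 1 u)
    (hT : T ⊆ X) (hne : T.Nonempty) : 1 ≤ SUM T := by
  calc 1 ≤ T.card := Finset.card_pos.2 hne
    _ = ∑ _x ∈ T, 1 := by rw [Finset.sum_const, smul_eq_mul, mul_one]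
    _ ≤ SUM T := by
        apply Finset.sum_le_sum
        intro x hx
        exact (Finset.mem_Icc.1 (hX x (hT hx))).1

theorem halver_exists (k u : ℕ) (hk : 1 ≤ k) (hu : 2 ≤ u) (X : Finset ℕ)
    (hX : ∀ x ∈ X, x ∈ Finset.Icc 1 u) :
    ∃ A ⊆ X, ∀ S ⊆ X, S.card ≤ k →
      ∃ R ⊆ X, R.card ≤ k ∧ SUM R = SUM S ∧
        |2*(((R ∩ A).card : ℝ)) - R.card| ≤
          2 * Real.sqrt k * (Real.log (2*(k:ℝ)*(u:ℝ)))^2 := by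
  classical
  set L : ℝ := Real.log (2*(k:ℝ)*(u:ℝ)) with hL
  set t : ℝ := 2 * Real.sqrt k * L^2 with htdef
  have hkpos : (0:ℝ) < k := by exact_mod_cast hk
  have hupos : (0:ℝ) < u := by positivity
  have hku4 : (4:ℝ) ≤ 2*(k:ℝ)*(u:ℝ) := by
    have h2u : (2:ℝ) ≤ u := by exact_mod_cast hu
    have h1k : (1:ℝ) ≤ k := by exact_mod_cast hk
    nlinarith
  have hL1 : 1 < L := by
    rw [hL]
    have : Real.exp 1 < 4 := by
      nlinarith [Real.exp_one_lt_d9]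
    calc (1:ℝ) = Real.log (Real.exp 1) := by rw [Real.log_exp]
      _ < Real.log 4 := by
          apply Real.log_lt_log (Real.exp_pos 1) this
      _ ≤ Real.log (2*(k:ℝ)*(u:ℝ)) := by
          apply Real.log_le_log (by norm_num) hku4
  have ht0 : 0 ≤ t := by
    rw [htdef]; positivity
  -- canonical representatives
  set P : ℕ → Prop := fun s => ∃ T, T ⊆ X ∧ T.card ≤ k ∧ 1 ≤ T.card ∧ SUM T = s with hP
  set R : ℕ → Finset ℕ := fun s => if h : P s then h.choose else ∅ with hRdef
  have hRspec : ∀ s, P s → R s ⊆ X ∧ (R s).card ≤ k ∧ 1 ≤ (R s).card ∧ SUM (R s) = s := by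
    intro s hs
    rw [hRdef]
    simp only [dif_pos hs]
    exact hs.choose_spec
  set 𝒮 : Finset ℕ := (Finset.Icc 1 (k*u)).filter P with hS
  have hScard : 𝒮.card ≤ k * u := by
    calc 𝒮.card ≤ (Finset.Icc 1 (k*u)).card := Finset.card_filter_le _ _
      _ = k * u := by rw [Nat.card_Icc]; omega
  -- union bound
  have hmain : ∃ A ∈ X.powerset, ∀ s ∈ 𝒮,
      |2*(((R s ∩ A).card : ℝ)) - (R s).card| ≤ t := by
    by_contra hcon
    push_neg at hcon
    have hsub : X.powerset ⊆ 𝒮.biUnion (fun s =>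
        X.powerset.filter (fun A => ¬ |2*(((R s ∩ A).card : ℝ)) - (R s).card| ≤ t)) := by
      intro A hA
      obtain ⟨s, hs, hbad⟩ := hcon A hA
      rw [Finset.mem_biUnion]
      exact ⟨s, hs, Finset.mem_filter.2 ⟨hA, not_le.2 hbad⟩⟩
    have hcount : ((2:ℝ))^X.card ≤ (𝒮.card : ℝ) * (2^X.card * (2 * Real.exp (-(t^2)/(4*k)))) := by
      have h1 : (X.powerset.card : ℝ) ≤ ∑ s ∈ 𝒮, ((X.powerset.filter
          (fun A => ¬ |2*(((R s ∩ A).card : ℝ)) - (R s).card| ≤ t)).card : ℝ) := by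
        calc (X.powerset.card : ℝ) ≤ ((𝒮.biUnion (fun s =>
            X.powerset.filter (fun A => ¬ |2*(((R s ∩ A).card : ℝ)) - (R s).card| ≤ t))).card : ℝ) := by
              exact_mod_cast Finset.card_le_card hsub
          _ ≤ _ := by exact_mod_cast Finset.card_biUnion_le
      have h2 : ∀ s ∈ 𝒮, ((X.powerset.filter
          (fun A => ¬ |2*(((R s ∩ A).card : ℝ)) - (R s).card| ≤ t)).card : ℝ)
            ≤ 2^X.card * (2 * Real.exp (-(t^2)/(4*k))) := by
        intro s hs
        have hPs : P s := (Finset.mem_filter.1 hs).2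
        obtain ⟨hR1, hR2, hR3, _⟩ := hRspec s hPs
        exact bad_count X (R s) hR1 k hR3 hR2 t ht0
      calc ((2:ℝ))^X.card = (X.powerset.card : ℝ) := by
            rw [Finset.card_powerset]; push_cast; ring
        _ ≤ ∑ s ∈ 𝒮, ((X.powerset.filter
            (fun A => ¬ |2*(((R s ∩ A).card : ℝ)) - (R s).card| ≤ t)).card : ℝ) := h1
        _ ≤ ∑ _s ∈ 𝒮, (2:ℝ)^X.card * (2 * Real.exp (-(t^2)/(4*k))) :=
            Finset.sum_le_sum h2
        _ = (𝒮.card : ℝ) * (2^X.card * (2 * Real.exp (-(t^2)/(4*k)))) := by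
            rw [Finset.sum_const, nsmul_eq_mul]
    -- numeric contradiction
    have hexp : -(t^2)/(4*(k:ℝ)) = -(L^4) := by
      rw [htdef]
      have : Real.sqrt k ^ 2 = (k:ℝ) := Real.sq_sqrt hkpos.le
      field_simp
      nlinarith [this]
    have hsmall : (𝒮.card : ℝ) * (2 * Real.exp (-(t^2)/(4*k))) < 1 := by
      rw [hexp]
      have h𝒮 : (𝒮.card : ℝ) ≤ (k:ℝ) * u := by exact_mod_cast hScard
      have hge : 2*(k:ℝ)*(u:ℝ) = Real.exp L := by
        rw [hL, Real.exp_log (by linarith)]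
      have hlt : Real.exp L < Real.exp (L^4) := by
        apply Real.exp_lt_exp.2
        have h2 : L < L^2 := by nlinarith
        have h4 : L^2 ≤ L^4 := by nlinarith [sq_nonneg (L^2 - L), sq_nonneg L]
        linarith
      have hkucard : (0:ℝ) ≤ (𝒮.card : ℝ) := Nat.cast_nonneg _
      have : (𝒮.card : ℝ) * 2 < Real.exp (L^4) := by
        nlinarith
      rw [show (𝒮.card:ℝ) * (2 * Real.exp (-(L^4)))
          = ((𝒮.card:ℝ)*2) / Real.exp (L^4) by rw [Real.exp_neg]; ring]
      rw [div_lt_one (Real.exp_pos _)]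
      exact this
    have hpowpos : (0:ℝ) < 2^X.card := by positivity
    nlinarith
  obtain ⟨A, hA, hGood⟩ := hmain
  refine ⟨A, Finset.mem_powerset.1 hA, ?_⟩
  intro S hSX hSk
  rcases Finset.eq_empty_or_nonempty S with rfl | hne
  · refine ⟨∅, Finset.empty_subset _, by simp, rfl, ?_⟩
    simp only [Finset.empty_inter, Finset.card_empty]
    simpa using ht0
  · set s := SUM S with hs
    have hPs : P s := ⟨S, hSX, hSk, Finset.card_pos.2 hne, rfl⟩
    have hsmem : s ∈ 𝒮 := by
      rw [hS, Finset.mem_filter, Finset.mem_Icc]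
      exact ⟨⟨SUM_pos u X S hX hSX hne, SUM_le u k X S hX hSX hSk⟩, hPs⟩
    obtain ⟨hR1, hR2, _, hR4⟩ := hRspec s hPs
    exact ⟨R s, hR1, hR2, hR4, hGood s hsmem⟩

theorem stmt_16 :
    ∃ c : ℝ, 0 < c ∧
      ∀ u k b : ℕ, 2 ≤ u → 1 ≤ b → b ≤ k →
        ∀ X : Finset ℕ, (∀ x ∈ X, x ∈ Finset.Icc 1 u) →
          ∃ X' X'' : Finset ℕ,
            IsHalver X X' X'' (k : ℝ)
              (c * ((k : ℝ) / Real.sqrt (b : ℝ)) *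
                (Real.log (2 * (k : ℝ) * (u : ℝ))) ^ 2) := by
  refine ⟨1, one_pos, ?_⟩
  intro u k b hu hb hbk X hX
  have hk : 1 ≤ k := le_trans hb hbk
  obtain ⟨A, hAX, hA⟩ := halver_exists k u hk hu X hX
  set L : ℝ := Real.log (2*(k:ℝ)*(u:ℝ)) with hL
  set Δ : ℝ := 1 * ((k : ℝ) / Real.sqrt (b : ℝ)) * L ^ 2 with hΔ
  have hkpos : (0:ℝ) < k := by exact_mod_cast hk
  have hbpos : (0:ℝ) < b := by exact_mod_cast hb
  have hsqb : (0:ℝ) < Real.sqrt b := Real.sqrt_pos.2 hbpos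
  have hsqk : (0:ℝ) < Real.sqrt k := Real.sqrt_pos.2 hkpos
  have htΔ : Real.sqrt k * L^2 ≤ Δ := by
    rw [hΔ]
    have h1 : Real.sqrt k ≤ (k:ℝ) / Real.sqrt b := by
      rw [le_div_iff₀ hsqb]
      calc Real.sqrt k * Real.sqrt b ≤ Real.sqrt k * Real.sqrt k := by
            apply mul_le_mul_of_nonneg_left _ hsqk.le
            exact Real.sqrt_le_sqrt (by exact_mod_cast hbk)
        _ = (k:ℝ) := Real.mul_self_sqrt hkpos.le
    have hL2 : (0:ℝ) ≤ L^2 := sq_nonneg L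
    nlinarith
  refine ⟨A, X \ A, Finset.union_sdiff_of_subset hAX, Finset.disjoint_sdiff, ?_⟩
  intro S hS hcard
  have hcard' : S.card ≤ k := by exact_mod_cast hcard
  obtain ⟨R, hR1, hR2, hR3, hR4⟩ := hA S hS hcard'
  have habs := abs_le.1 hR4
  have hsplit : ((R \ A).card : ℝ) + ((R ∩ A).card : ℝ) = (R.card : ℝ) := by
    exact_mod_cast Finset.card_sdiff_add_card_inter R A
  have hRXA : R ∩ (X \ A) = R \ A := by
    ext x
    simp only [Finset.mem_inter, Finset.mem_sdiff]
    constructor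
    · rintro ⟨h1, _, h3⟩; exact ⟨h1, h3⟩
    · rintro ⟨h1, h2⟩; exact ⟨h1, hR1 h1, h2⟩
  refine ⟨R, hR1, by exact_mod_cast hR2, hR3, ?_, ?_⟩
  · linarith [habs.2]
  · rw [hRXA]
    linarith [habs.1]
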